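/- If the pre-execution of every transaction in a batch is performed against the same snapshot state s₀ (reads see s₀, writes are buffered locally), and the batch is then ordered so that no transaction's write set intersects a later transaction's read set or write set, then the serial execution of the ordered batch starting from s₀ assigns to every location the same value as the union of the buffered write sets applied to s₀ (last-writer irrelevance: at most one transaction writes any location). -/

import Mathlib

structure Tx (Loc V : Type*) where
  R : Set Loc
  W : Set Loc
  step : (Loc → V) → (Loc → V)
  writes_only : ∀ s l, l ∉ W → step s l = s l
  reads_only : ∀ s s', (∀ l ∈ R, s l = s' l) → ∀ l ∈ W, step s l = step s' l

def exec {Loc V : Type*} (s₀ : Loc → V) (ts : List (Tx Loc V)) : Loc → V :=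
  ts.foldl (fun s t => t.step s) s₀

lemma exec_eq_aux {Loc V : Type*} (ts : List (Tx Loc V))
    (h : ts.Pairwise (fun a b => Disjoint a.W (b.R ∪ b.W))) :
    ∀ s₀ : Loc → V,
    (∀ t ∈ ts, ∀ l ∈ t.W, exec s₀ ts l = t.step s₀ l) ∧
    (∀ l, (∀ t ∈ ts, l ∉ t.W) → exec s₀ ts l = s₀ l) := by
  induction ts with
  | nil => intro s₀; exact ⟨by simp, fun l _ => rfl⟩
  | cons t ts ih =>
    rw [List.pairwise_cons] at h
    obtain ⟨hd, hp⟩ := h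
    intro s₀
    have ihs := ih hp (t.step s₀)
    constructor
    · intro t' ht' l hl
      rcases List.mem_cons.mp ht' with ht' | ht'
      · subst ht'
        have : ∀ t'' ∈ ts, l ∉ t''.W := fun t'' h'' hl' =>
          ((hd t'' h'').ne_of_mem hl (Set.mem_union_right _ hl')) rfl
        exact (ihs.2 l this)
      · have := ihs.1 t' ht' l hl
        rw [show (exec s₀ (t :: ts)) = exec (t.step s₀) ts from rfl, this]
        exact t'.reads_only _ _ (fun r hr =>
          t.writes_only s₀ r (fun hrW =>
            ((hd t' ht').ne_of_mem hrW (Set.mem_union_left _ hr)) rfl)) l hl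
    · intro l hl
      have h1 : exec (t.step s₀) ts l = t.step s₀ l :=
        ihs.2 l (fun t'' h'' => hl t'' (List.mem_cons_of_mem _ h''))
      rw [show (exec s₀ (t :: ts)) = exec (t.step s₀) ts from rfl, h1]
      exact t.writes_only s₀ l (hl t List.mem_cons_self)

/-- Snapshot pre-execution: if every transaction is pre-executed against the
same snapshot `s₀` (its buffered writes on `W(t)` are `t.step s₀`), and the
batch is ordered so that no transaction's write set meets a later transaction's
read or write set, then the write sets are pairwise disjoint (at most one
writer per location) and the serial execution from `s₀` equals the union of the
buffered writes applied to `s₀`. -/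
theorem snapshot_preexec_eq {Loc V : Type*} (s₀ : Loc → V)
    (ts : List (Tx Loc V))
    (h : ts.Pairwise (fun a b => Disjoint a.W (b.R ∪ b.W))) :
    ts.Pairwise (fun a b => Disjoint a.W b.W) ∧
    (∀ t ∈ ts, ∀ l ∈ t.W, exec s₀ ts l = t.step s₀ l) ∧
    (∀ l, (∀ t ∈ ts, l ∉ t.W) → exec s₀ ts l = s₀ l) := by
  obtain ⟨h1, h2⟩ := exec_eq_aux ts h s₀
  refine ⟨h.imp (fun hab => hab.mono_right Set.subset_union_right), h1, h2⟩
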